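/- The substitution σ = u/x, u(a_R)/u arising from the only possible SLJF derivation attempt for the skolemisation ↓A⁻_x ⊗ ↓B(x)⁻_x ⊢ ↑(↓A⁻_(a_L) ⊗ ↓B(u)⁻_(a_R,u)) is not admissible for the context (x, a_L): some xσⁿ contains a_R while a_L occurs in the context; hence the skolemised sequent is not derivable in SLJF. -/

import Mathlib

set_option autoImplicit true

/-- Variables of SLJF: existential variables `x`, Eigen-variables `u`,
and special variables — either a paired left/right special variable
`a_L`/`a_R` (introduced by skolemising `⊗` on the right and `⊸` on the
left) or an unpaired special variable `a` (introduced at `!`). -/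
inductive Var : Type
  | exv : ℕ → Var
  | eig : ℕ → Var
  | spL : ℕ → Var
  | spR : ℕ → Var
  | sp  : ℕ → Var
deriving DecidableEq

def Var.isEx : Var → Bool | .exv _ => true | _ => false
def Var.isEig : Var → Bool | .eig _ => true | _ => false
def Var.isSpecial : Var → Bool
  | .spL _ => true | .spR _ => true | .sp _ => true | _ => false

/-- The partner of a paired special variable: `a_L ↦ a_R` and `a_R ↦ a_L`. -/
def Var.pair? : Var → Option Var
  | .spL n => some (.spR n) | .spR n => some (.spL n) | _ => none

/-- Terms: variables, function symbols applied to a term, Skolem terms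
`u(t)` (an Eigen-variable used as a function), pairing and unit (used
to encode tuples `(t, …, t)`). -/
inductive Tm : Type
  | var : Var → Tm
  | fn : ℕ → Tm → Tm
  | app : Var → Tm → Tm
  | pair : Tm → Tm → Tm
  | unit : Tm
deriving DecidableEq

/-- `t.occurs v`: the variable `v` occurs in the term `t`. -/
def Tm.occurs (v : Var) : Tm → Prop
  | .var w => w = v
  | .fn _ t => t.occurs v
  | .app u t => u = v ∨ t.occurs v
  | .pair s t => s.occurs v ∨ t.occurs v
  | .unit => False

def Tm.fv : Tm → List Var
  | .var w => [w]
  | .fn _ t => t.fv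
  | .app u t => u :: t.fv
  | .pair s t => s.fv ++ t.fv
  | .unit => []

/-- Parallel substitutions `σ ::= · | σ, t/x | σ, u(t)/u | σ, t/a`,
represented as association lists of bindings. -/
abbrev Subst := List (Var × Tm)

def Subst.get (σ : Subst) (v : Var) : Option Tm :=
  (σ.find? fun p => p.1 = v).map Prod.snd

/-- Application of a substitution to a term. -/
def Tm.subst (σ : Subst) : Tm → Tm
  | .var w => (Subst.get σ w).getD (.var w)
  | .fn f t => .fn f (t.subst σ)
  | .app u t => .app u (t.subst σ)
  | .pair s t => .pair (s.subst σ) (t.subst σ)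
  | .unit => .unit

def Tm.rename (ρ : Var → Var) : Tm → Tm
  | .var w => .var (ρ w)
  | .fn f t => .fn f (t.rename ρ)
  | .app u t => .app (ρ u) (t.rename ρ)
  | .pair s t => .pair (s.rename ρ) (t.rename ρ)
  | .unit => .unit

def Subst.rename (ρ : Var → Var) (σ : Subst) : Subst :=
  σ.map fun p => (ρ p.1, p.2.rename ρ)

/-- `σ ↾ Φ`: restriction of `σ` to the bindings of variables in `Φ`. -/
def Subst.restrict (σ : Subst) (Φ : List Var) : Subst :=
  σ.filter fun p => p.1 ∈ Φ

/-- `σ \ Φ`: restriction of `σ` to the bindings of variables not in `Φ`. -/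
def Subst.minus (σ : Subst) (Φ : List Var) : Subst :=
  σ.filter fun p => p.1 ∉ Φ

/-- Admissibility (Definition 2): `σ` is admissible for `Φ` iff
(1) no existential or special variable `v` (bound by `σ`) occurs in
`vσⁿ` for any `n ≥ 1`, and (2) whenever `xσⁿ` contains a paired special
variable `a_L` (resp. `a_R`) for some `x` bound by `σ`, the partner
variable `a_R` (resp. `a_L`) does not occur in `Φ`. -/
def admissible (σ : Subst) (Φ : List Var) : Prop :=
  (∀ v ∈ σ.map Prod.fst, (v.isEx || v.isSpecial) = true →
      ∀ n, 1 ≤ n → ¬ Tm.occurs v ((Tm.subst σ)^[n] (Tm.var v))) ∧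
  (∀ v ∈ σ.map Prod.fst, ∀ n : ℕ, ∀ a a' : Var, Var.pair? a = some a' →
      Tm.occurs a ((Tm.subst σ)^[n] (Tm.var v)) → a' ∉ Φ)

/-- `Aσ = Bσ` at the axioms: equality of the two terms after
(sufficiently many iterations of) applying `σ`. -/
def substEq (σ : Subst) (t s : Tm) : Prop :=
  ∃ k, (Tm.subst σ)^[k] t = (Tm.subst σ)^[k] s

mutual
/-- Negative formulas of SLJF: atoms `A⁻` indexed by a variable context
`Φ`, linear implication and up-shift. -/
inductive NF : Type
  | natom : ℕ → Tm → List Var → NF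
  | lolli : PF → NF → NF
  | up : PF → NF
/-- Positive formulas of SLJF: atoms `A⁺` indexed by `Φ`, tensor, the
annotated exponential `!_(a;Φ;σ)` and down-shift. -/
inductive PF : Type
  | patom : ℕ → Tm → List Var → PF
  | tensor : PF → PF → PF
  | bang : Var → List Var → Subst → NF → PF
  | down : NF → PF
end

mutual
def NF.rename (ρ : Var → Var) : NF → NF
  | .natom p t Φ => .natom p (t.rename ρ) (Φ.map ρ)
  | .lolli P N => .lolli (P.rename ρ) (N.rename ρ)
  | .up P => .up (P.rename ρ)
def PF.rename (ρ : Var → Var) : PF → PF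
  | .patom p t Φ => .patom p (t.rename ρ) (Φ.map ρ)
  | .tensor P Q => .tensor (P.rename ρ) (Q.rename ρ)
  | .bang a Φ σ N => .bang (ρ a) (Φ.map ρ) (Subst.rename ρ σ) (N.rename ρ)
  | .down N => .down (N.rename ρ)
end

mutual
/-- Free variables of an SLJF formula (Definition 1). -/
def NF.fv : NF → List Var
  | .natom _ _ Φ => Φ
  | .lolli P N => P.fv ++ N.fv
  | .up P => P.fv
def PF.fv : PF → List Var
  | .patom _ _ Φ => Φ
  | .tensor P Q => P.fv ++ Q.fv
  | .bang _ Φ _ _ => Φ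
  | .down N => N.fv
end

mutual
/-- The variable contexts `Φ` of all atoms (axioms) of a formula. -/
def NF.atomCtxs : NF → List (List Var)
  | .natom _ _ Φ => [Φ]
  | .lolli P N => P.atomCtxs ++ N.atomCtxs
  | .up P => P.atomCtxs
def PF.atomCtxs : PF → List (List Var)
  | .patom _ _ Φ => [Φ]
  | .tensor P Q => P.atomCtxs ++ Q.atomCtxs
  | .bang _ _ _ N => N.atomCtxs
  | .down N => N.atomCtxs
end

/-- Polarity-agnostic skolemised formulas `K`. -/
abbrev KF := NF ⊕ PF

/-- Polarity adjustment `pos(·)` (Figure 4). -/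
def KF.pos : KF → PF
  | .inl (.up P) => P
  | .inl N => .down N
  | .inr P => P

/-- Polarity adjustment `neg(·)` (Figure 4). -/
def KF.neg : KF → NF
  | .inl N => N
  | .inr (.down N) => N
  | .inr P => .up P

def KF.fvK : KF → List Var
  | .inl N => N.fv
  | .inr P => P.fv

/-- A closure `(a; Φ; σ) : N` of the modal context. -/
structure Closure : Type where
  name : Var
  ctx : List Var
  sub : Subst
  fm : NF

/-- The modal (unrestricted) context of SLJF. -/
abbrev MCtx := List Closure

/-- The tuple term `(v₁, …, vₙ)` of a variable context. -/
def listToTm (Φ : List Var) : Tm := Φ.foldr (fun v t => Tm.pair (.var v) t) .unit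

/-- The three judgment forms of SLJF. -/
inductive SFoc : Type
  | inv : NF → SFoc
  | left : NF → NF → SFoc
  | right : PF → SFoc

/-- Derivability in SLJF (Figure 3), indexed by a bound `n` on the
height of the derivation: `SDer Γ Δ J σ n`. -/
inductive SDer : MCtx → Multiset PF → SFoc → Subst → ℕ → Prop
  | axNeg : substEq σ t s → admissible σ (Φ₁ ++ Φ₂) →
      SDer Γ 0 (.left (.natom p t Φ₁) (.natom p s Φ₂)) σ (n+1)
  | axPos : substEq σ t s → admissible σ (Φ₁ ++ Φ₂) →
      SDer Γ {.patom p t Φ₁} (.right (.patom p s Φ₂)) σ (n+1)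
  | lolliL : SDer Γ Δ₁ (.right P) σ n → SDer Γ Δ₂ (.left N C) σ n →
      SDer Γ (Δ₁ + Δ₂) (.left (.lolli P N) C) σ (n+1)
  | tensorR : SDer Γ Δ₁ (.right P₁) σ n → SDer Γ Δ₂ (.right P₂) σ n →
      SDer Γ (Δ₁ + Δ₂) (.right (.tensor P₁ P₂)) σ (n+1)
  | lolliR : SDer Γ (P ::ₘ Δ) (.inv N) σ n → SDer Γ Δ (.inv (.lolli P N)) σ (n+1)
  | tensorL : SDer Γ (P₁ ::ₘ P₂ ::ₘ Δ) (.inv C) σ n →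
      SDer Γ (PF.tensor P₁ P₂ ::ₘ Δ) (.inv C) σ (n+1)
  | bangL : SDer (⟨a, Φ, σ', N⟩ :: Γ) Δ (.inv C) σ n →
      SDer Γ (PF.bang a Φ σ' N ::ₘ Δ) (.inv C) σ (n+1)
  | bangR : SDer Γ 0 (.inv N)
        (σ ++ σ' ++ [(a, listToTm (Γ.flatMap Closure.ctx))]
           ++ Γ.map (fun c => (c.name, listToTm Φ))) n →
      SDer Γ 0 (.right (.bang a Φ σ' N)) σ (n+1)
  | copy : ⟨a, Φ, σ', N⟩ ∈ Γ → (∀ v ∈ Φ, ρ v = v) →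
      SDer Γ Δ (.left (N.rename ρ) C) (σ ++ Subst.rename ρ σ') n →
      SDer Γ Δ (.inv C) σ (n+1)
  | focusL : SDer Γ Δ (.left N C) σ n → SDer Γ (PF.down N ::ₘ Δ) (.inv C) σ (n+1)
  | focusR : SDer Γ Δ (.right P) σ n → SDer Γ Δ (.inv (.up P)) σ (n+1)
  | blurL : SDer Γ (P ::ₘ Δ) (.inv C) σ n → SDer Γ Δ (.left (.up P) C) σ (n+1)
  | blurR : SDer Γ Δ (.inv N) σ n → SDer Γ Δ (.right (.down N)) σ (n+1)

/-- Derivability in SLJF (without the height bound). -/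
def SDeriv (Γ : MCtx) (Δ : Multiset PF) (F : SFoc) (σ : Subst) : Prop :=
  ∃ n, SDer Γ Δ F σ n

/-- `FFR Γ Δ N σ n`: there is an SLJF derivation of `Γ; Δ ⊢ N; σ` of
height at most `n` whose first application of a focus rule is `focusR`
(possibly preceded by the invertible rules `⊗L`, `!L`, `⊸R`). -/
inductive FFR : MCtx → Multiset PF → NF → Subst → ℕ → Prop
  | tensorL : FFR Γ (P₁ ::ₘ P₂ ::ₘ Δ) C σ n →
      FFR Γ (PF.tensor P₁ P₂ ::ₘ Δ) C σ (n+1)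
  | bangL : FFR (⟨a, Φ, σ', N⟩ :: Γ) Δ C σ n →
      FFR Γ (PF.bang a Φ σ' N ::ₘ Δ) C σ (n+1)
  | lolliR : FFR Γ (P ::ₘ Δ) N σ n → FFR Γ Δ (.lolli P N) σ (n+1)
  | focusR : SDer Γ Δ (.right P) σ n → FFR Γ Δ (.up P) σ (n+1)

/-- `FFL Γ Δ C σ n`: there is an SLJF derivation of `Γ; Δ ⊢ C; σ` of
height at most `n` whose first application of a focus rule is `focusL`. -/
inductive FFL : MCtx → Multiset PF → NF → Subst → ℕ → Prop
  | tensorL : FFL Γ (P₁ ::ₘ P₂ ::ₘ Δ) C σ n →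
      FFL Γ (PF.tensor P₁ P₂ ::ₘ Δ) C σ (n+1)
  | bangL : FFL (⟨a, Φ, σ', N⟩ :: Γ) Δ C σ n →
      FFL Γ (PF.bang a Φ σ' N ::ₘ Δ) C σ (n+1)
  | lolliR : FFL Γ (P ::ₘ Δ) N σ n → FFL Γ Δ (.lolli P N) σ (n+1)
  | focusL : SDer Γ Δ (.left N₀ C) σ n → FFL Γ (PF.down N₀ ::ₘ Δ) C σ (n+1)

/-- `FFLon N₀ Γ Δ C σ n`: as `FFL`, but the first focus rule is
`focusL` applied specifically to the formula `↓N₀`. -/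
inductive FFLon (N₀ : NF) : MCtx → Multiset PF → NF → Subst → ℕ → Prop
  | tensorL : FFLon N₀ Γ (P₁ ::ₘ P₂ ::ₘ Δ) C σ n →
      FFLon N₀ Γ (PF.tensor P₁ P₂ ::ₘ Δ) C σ (n+1)
  | bangL : FFLon N₀ (⟨a, Φ, σ', N⟩ :: Γ) Δ C σ n →
      FFLon N₀ Γ (PF.bang a Φ σ' N ::ₘ Δ) C σ (n+1)
  | lolliR : FFLon N₀ Γ (P ::ₘ Δ) N σ n → FFLon N₀ Γ Δ (.lolli P N) σ (n+1)
  | focusL : SDer Γ Δ (.left N₀ C) σ n → FFLon N₀ Γ (PF.down N₀ ::ₘ Δ) C σ (n+1)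

/-- `Φ ⊢ t`: all variables of `t` are declared in `Φ`. -/
def TmOk (Φ : List Var) (t : Tm) : Prop := ∀ v ∈ t.fv, v ∈ Φ

/-- Typing of parallel substitutions `σ : Φ → Φ'` (Figure 2). -/
inductive SubTy : Subst → List Var → List Var → Prop
  | nil : SubTy [] Φ []
  | exv : TmOk Φ t → SubTy σ Φ Φ' →
      SubTy ((Var.exv m, t) :: σ) Φ (Var.exv m :: Φ')
  | eig : TmOk Φ t → SubTy σ Φ Φ' →
      SubTy ((Var.eig m, Tm.app (Var.eig m) t) :: σ) Φ (Var.eig m :: Φ')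
  | spL : TmOk Φ t → SubTy σ Φ Φ' →
      SubTy ((Var.spL m, t) :: σ) Φ (Var.spL m :: Φ')
  | spR : TmOk Φ t → SubTy σ Φ Φ' →
      SubTy ((Var.spR m, t) :: σ) Φ (Var.spR m :: Φ')
  | sp : TmOk Φ t → SubTy σ Φ Φ' →
      SubTy ((Var.sp m, t) :: σ) Φ (Var.sp m :: Φ')

-- Variables of Example 6: `x`, `u` and the special pair `a_L`, `a_R`.
def x₀ : Var := Var.exv 0
def u₀ : Var := Var.eig 0
def aL : Var := Var.spL 0
def aR : Var := Var.spR 0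

/-- The substitution `σ = u/x, u(a_R)/u` arising from the only possible
derivation attempt. -/
def σ₁₇ : Subst := [(x₀, Tm.var u₀), (u₀, Tm.app u₀ (Tm.var aR))]

/-- The skolemised antecedent `↓A⁻_x ⊗ ↓B(x)⁻_x`
(`A⁻` nullary, `B⁻` unary). -/
def ante₁₇ : PF :=
  PF.tensor (PF.down (NF.natom 0 Tm.unit [x₀]))
    (PF.down (NF.natom 1 (Tm.var x₀) [x₀]))

/-- The skolemised succedent `↑(↓A⁻_(a_L) ⊗ ↓B(u)⁻_(a_R,u))`. -/
def succ₁₇ : NF :=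
  NF.up (PF.tensor (PF.down (NF.natom 0 Tm.unit [aL]))
    (PF.down (NF.natom 1 (Tm.var u₀) [aR, u₀])))

/-!
With no `!` anywhere the modal context stays empty and the antecedent only decomposes into
down-shifted negative atoms, so a derivation must focus on the right, split the `⊗`, and close
`A⁻_(a_L)` by an axiom against an antecedent atom. That axiom needs `σ` admissible for a context
containing `a_L`, but `xσ² = u(a_R)`.
-/

inductive PF.IsTensorOfNegAtoms : PF → Prop
  | down_natom (p : ℕ) (t : Tm) (Φ : List Var) : (PF.down (NF.natom p t Φ)).IsTensorOfNegAtoms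
  | tensor {P Q : PF} : P.IsTensorOfNegAtoms → Q.IsTensorOfNegAtoms →
      (PF.tensor P Q).IsTensorOfNegAtoms

lemma PF.forall_isTensorOfNegAtoms_cons_cons {P₁ P₂ : PF} {Δ : Multiset PF}
    (h : ∀ P ∈ PF.tensor P₁ P₂ ::ₘ Δ, P.IsTensorOfNegAtoms) :
    ∀ P ∈ P₁ ::ₘ P₂ ::ₘ Δ, P.IsTensorOfNegAtoms := by
  obtain ⟨h₁, h₂⟩ : P₁.IsTensorOfNegAtoms ∧ P₂.IsTensorOfNegAtoms := by
    cases h _ (Multiset.mem_cons_self _ _) with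
    | tensor h₁ h₂ => exact ⟨h₁, h₂⟩
  intro P hP
  rcases Multiset.mem_cons.mp hP with rfl | hP
  · exact h₁
  rcases Multiset.mem_cons.mp hP with rfl | hP
  · exact h₂
  · exact h _ (Multiset.mem_cons_of_mem hP)

/-- With an empty modal context, an atomic goal can only be closed by focusing on an
antecedent atom of the same predicate. -/
lemma SDer.exists_admissible_of_inv_natom {σ : Subst} {p : ℕ} {t : Tm} {Φ : List Var} :
    ∀ {n : ℕ} {Δ : Multiset PF}, SDer [] Δ (.inv (.natom p t Φ)) σ n →
      (∀ P ∈ Δ, P.IsTensorOfNegAtoms) → ∃ Φ', admissible σ (Φ' ++ Φ) := by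
  intro n
  induction n with
  | zero => intro Δ h; cases h
  | succ n ih =>
    intro Δ h hΔ
    cases h with
    | tensorL hd => exact ih hd (PF.forall_isTensorOfNegAtoms_cons_cons hΔ)
    | bangL => cases hΔ _ (Multiset.mem_cons_self _ _)
    | copy hmem => cases hmem
    | focusL hd =>
      cases hΔ _ (Multiset.mem_cons_self _ _)
      cases hd with
      | axNeg _ hadm => exact ⟨_, hadm⟩

/-- Focusing on a negative atom cannot close a non-atomic goal. -/
lemma SDer.exists_right_of_inv_up {σ : Subst} {P : PF} :
    ∀ {n : ℕ} {Δ : Multiset PF}, SDer [] Δ (.inv (.up P)) σ n →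
      (∀ Q ∈ Δ, Q.IsTensorOfNegAtoms) →
      ∃ Δ' m, (∀ Q ∈ Δ', Q.IsTensorOfNegAtoms) ∧ SDer [] Δ' (.right P) σ m := by
  intro n
  induction n with
  | zero => intro Δ h; cases h
  | succ n ih =>
    intro Δ h hΔ
    cases h with
    | tensorL hd => exact ih hd (PF.forall_isTensorOfNegAtoms_cons_cons hΔ)
    | bangL => cases hΔ _ (Multiset.mem_cons_self _ _)
    | copy hmem => cases hmem
    | focusL hd =>
      cases hΔ _ (Multiset.mem_cons_self _ _)
      cases hd
    | focusR hd => exact ⟨Δ, n, hΔ, hd⟩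

lemma occurs_aR_iterate_subst_σ₁₇_two : Tm.occurs aR ((Tm.subst σ₁₇)^[2] (Tm.var x₀)) := by
  change Tm.occurs aR (Tm.app u₀ (Tm.var aR))
  exact Or.inr rfl

lemma not_admissible_σ₁₇ {Φ : List Var} (h : aL ∈ Φ) : ¬ admissible σ₁₇ Φ :=
  fun hadm => hadm.2 x₀ (by simp [σ₁₇]) 2 aR aL rfl occurs_aR_iterate_subst_σ₁₇_two h

/-- Example 6: the substitution `σ = u/x, u(a_R)/u` is not admissible
for the context `(x, a_L)` — indeed some `xσⁿ` contains `a_R` while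
`a_L` occurs in the context — and hence the skolemised sequent
`↓A⁻_x ⊗ ↓B(x)⁻_x ⊢ ↑(↓A⁻_(a_L) ⊗ ↓B(u)⁻_(a_R,u))` is not derivable
in SLJF. -/
theorem stmt17 :
    (∃ n, Tm.occurs aR ((Tm.subst σ₁₇)^[n] (Tm.var x₀))) ∧
    ¬ admissible σ₁₇ [x₀, aL] ∧
    ¬ SDeriv [] {ante₁₇} (.inv succ₁₇) σ₁₇ := by
  refine ⟨⟨2, occurs_aR_iterate_subst_σ₁₇_two⟩, not_admissible_σ₁₇ (by simp), ?_⟩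
  rintro ⟨n, h⟩
  have hante : ∀ P ∈ ({ante₁₇} : Multiset PF), P.IsTensorOfNegAtoms := by
    simp only [Multiset.mem_singleton, forall_eq]
    exact .tensor (.down_natom _ _ _) (.down_natom _ _ _)
  obtain ⟨Δ, m, hΔ, hright⟩ := h.exists_right_of_inv_up hante
  -- `↓A⁻_(a_L)` must be closed by an axiom whose context contains `a_L`.
  cases hright with
  | tensorR hA _ =>
    cases hA with
    | blurR hA =>
      obtain ⟨Φ, hadm⟩ := hA.exists_admissible_of_inv_natom
        (fun Q hQ => hΔ Q (Multiset.mem_add.mpr (Or.inl hQ)))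
      exact not_admissible_σ₁₇ (by simp) hadm
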